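/- Let S = 𝒮[Y; G_α; φ_{α,β}] be a finite Clifford semigroup over the finite semilattice Y. Then 0 < χ(S) ≤ χ(Y), where Y is viewed as a semigroup under its meet operation. -/
import Mathlib


/-- A relation `ρ` is a *diagonal subsemigroup* with respect to multiplication `mul`:
it is reflexive and compatible with `mul`. -/
def IsDiagonal {S : Type*} (mul : S → S → S) (ρ : S → S → Prop) : Prop :=
  (∀ s, ρ s s) ∧ ∀ a b c d, ρ a b → ρ c d → ρ (mul a c) (mul b d)

/-- A relation `ρ` is a *congruence* with respect to `mul`. -/
def IsCongruence {S : Type*} (mul : S → S → S) (ρ : S → S → Prop) : Prop :=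
  Equivalence ρ ∧ ∀ a b c d, ρ a b → ρ c d → ρ (mul a c) (mul b d)

/-- The DSC coefficient: the number of congruences divided by the number of
diagonal subsemigroups. -/
noncomputable def chi {S : Type*} (mul : S → S → S) : ℚ :=
  (Nat.card {ρ : S → S → Prop // IsCongruence mul ρ} : ℚ) /
  (Nat.card {ρ : S → S → Prop // IsDiagonal mul ρ} : ℚ)

/-- Multiplication of the Clifford semigroup `𝒮[Y; G_α; φ_{α,β}]` on `Σ α, G α`:
for `x ∈ G_α`, `y ∈ G_β`, `x·y = (x φ_{α,αβ})(y φ_{β,αβ})`, computed in `G_{α⊓β}`. -/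
def cliffMul {Y : Type*} [SemilatticeInf Y] (G : Y → Type*) [∀ α, Group (G α)]
    (φ : ∀ α β : Y, β ≤ α → (G α →* G β)) (x y : Σ α, G α) : Σ α, G α :=
  ⟨x.1 ⊓ y.1, φ x.1 (x.1 ⊓ y.1) inf_le_left x.2 * φ y.1 (x.1 ⊓ y.1) inf_le_right y.2⟩


set_option linter.unusedSectionVars false

section Cliff
variable {Y : Type*} [SemilatticeInf Y] {G : Y → Type*} [∀ α, Group (G α)]
  (φ : ∀ α β : Y, β ≤ α → (G α →* G β))

lemma sigma_phi_congr {α β γ : Y} (h1 : β ≤ α) (h2 : γ ≤ α) (e : β = γ) (x : G α) :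
    (⟨β, φ α β h1 x⟩ : Σ δ, G δ) = ⟨γ, φ α γ h2 x⟩ := by subst e; rfl

lemma sigma_one_congr {α β : Y} (e : α = β) :
    (⟨α, (1 : G α)⟩ : Σ δ, G δ) = ⟨β, (1 : G β)⟩ := by subst e; rfl

lemma cliffMul_mk (α β : Y) (x : G α) (y : G β) :
    cliffMul G φ ⟨α, x⟩ ⟨β, y⟩ =
      ⟨α ⊓ β, φ α (α ⊓ β) inf_le_left x * φ β (α ⊓ β) inf_le_right y⟩ := rfl

lemma cliffMul_one_one (α β : Y) :
    cliffMul G φ ⟨α, (1 : G α)⟩ ⟨β, (1 : G β)⟩ = ⟨α ⊓ β, (1 : G (α ⊓ β))⟩ := by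
  rw [cliffMul_mk]; simp

variable (hid : ∀ (α : Y) (x : G α), φ α α le_rfl x = x)
include hid

lemma sigma_phi_self {α β : Y} (h1 : β ≤ α) (e : β = α) (x : G α) :
    (⟨β, φ α β h1 x⟩ : Σ δ, G δ) = ⟨α, x⟩ := by
  subst e; exact congrArg _ (hid _ x)

lemma cliffMul_same (α : Y) (x y : G α) :
    cliffMul G φ ⟨α, x⟩ ⟨α, y⟩ = ⟨α, x * y⟩ := by
  rw [cliffMul_mk, ← map_mul]
  exact sigma_phi_self φ hid _ (inf_idem α) _

variable {ρ : (Σ δ, G δ) → (Σ δ, G δ) → Prop}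
variable (hρ : IsCongruence (cliffMul G φ) ρ)
include hρ

lemma rel_pow {α β : Y} {x : G α} {y : G β} (h : ρ ⟨α, x⟩ ⟨β, y⟩) :
    ∀ n : ℕ, ρ ⟨α, x ^ (n + 1)⟩ ⟨β, y ^ (n + 1)⟩ := by
  intro n
  induction n with
  | zero => simpa using h
  | succ k ih =>
      have := hρ.2 _ _ _ _ h ih
      rwa [cliffMul_same φ hid, cliffMul_same φ hid, ← pow_succ', ← pow_succ'] at this

lemma rel_inv [∀ δ, Finite (G δ)] {α β : Y} {x : G α} {y : G β}
    (h : ρ ⟨α, x⟩ ⟨β, y⟩) : ρ ⟨α, x⁻¹⟩ ⟨β, y⁻¹⟩ := by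
  set m := orderOf x * orderOf y with hm
  have hm1 : 1 ≤ m := Nat.mul_pos (orderOf_pos x) (orderOf_pos y)
  have hx : x ^ (2 * m) = 1 := by
    apply orderOf_dvd_iff_pow_eq_one.mp; exact ⟨2 * orderOf y, by rw [hm]; ring⟩
  have hy : y ^ (2 * m) = 1 := by
    apply orderOf_dvd_iff_pow_eq_one.mp; exact ⟨2 * orderOf x, by rw [hm]; ring⟩
  have key : ∀ (H : Type _) [Group H] (z : H), z ^ (2 * m) = 1 → z ^ (2 * m - 2 + 1) = z⁻¹ := by
    intro H _ z hz
    have e : 2 * m - 2 + 1 = 2 * m - 1 := by omega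
    rw [e]
    apply eq_inv_of_mul_eq_one_left
    rw [← pow_succ]
    have e2 : 2 * m - 1 + 1 = 2 * m := by omega
    rw [e2, hz]
  have := rel_pow φ hid hρ h (2 * m - 2)
  rwa [key _ x hx, key _ y hy] at this

lemma ker_one (α : Y) : ρ ⟨α, (1 : G α)⟩ ⟨α, 1⟩ := hρ.1.refl _

lemma ker_mul {α : Y} {x y : G α} (hx : ρ ⟨α, x⟩ ⟨α, 1⟩) (hy : ρ ⟨α, y⟩ ⟨α, 1⟩) :
    ρ ⟨α, x * y⟩ ⟨α, 1⟩ := by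
  have := hρ.2 _ _ _ _ hx hy
  rwa [cliffMul_same φ hid, cliffMul_same φ hid, mul_one] at this

lemma ker_conj {α : Y} (g : G α) {x : G α} (hx : ρ ⟨α, x⟩ ⟨α, 1⟩) :
    ρ ⟨α, g * x * g⁻¹⟩ ⟨α, 1⟩ := by
  have h1 := hρ.2 _ _ _ _ (hρ.1.refl ⟨α, g⟩) hx
  rw [cliffMul_same φ hid, cliffMul_same φ hid] at h1
  have h2 := hρ.2 _ _ _ _ h1 (hρ.1.refl ⟨α, g⁻¹⟩)
  rw [cliffMul_same φ hid, cliffMul_same φ hid] at h2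
  simpa using h2

lemma ker_phi {α β : Y} (h : β ≤ α) {x : G α} (hx : ρ ⟨α, x⟩ ⟨α, 1⟩) :
    ρ ⟨β, φ α β h x⟩ ⟨β, 1⟩ := by
  have h1 := hρ.2 _ _ _ _ hx (hρ.1.refl ⟨β, (1 : G β)⟩)
  rw [cliffMul_mk, cliffMul_one_one] at h1
  rw [map_one, mul_one] at h1
  rwa [sigma_phi_congr φ inf_le_left h (inf_eq_right.mpr h) x,
    sigma_one_congr (inf_eq_right.mpr h)] at h1

lemma cong_char [∀ δ, Finite (G δ)] {α β : Y} (x : G α) (y : G β) :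
    ρ ⟨α, x⟩ ⟨β, y⟩ ↔
      (ρ ⟨α, (1 : G α)⟩ ⟨β, (1 : G β)⟩ ∧
        ρ ⟨α ⊓ β, φ α (α ⊓ β) inf_le_left x * (φ β (α ⊓ β) inf_le_right y)⁻¹⟩
          ⟨α ⊓ β, (1 : G (α ⊓ β))⟩) := by
  constructor
  · intro h
    have hinv := rel_inv φ hid hρ h
    have h1 : ρ ⟨α, (1 : G α)⟩ ⟨β, (1 : G β)⟩ := by
      have := hρ.2 _ _ _ _ h hinv
      rw [cliffMul_same φ hid, cliffMul_same φ hid] at this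
      simpa using this
    have h2 : ρ ⟨α ⊓ β, φ α (α ⊓ β) inf_le_left x * (φ β (α ⊓ β) inf_le_right y)⁻¹⟩
        ⟨β, (1 : G β)⟩ := by
      have := hρ.2 _ _ _ _ h (hρ.1.refl ⟨β, y⁻¹⟩)
      rw [cliffMul_mk, cliffMul_same φ hid] at this
      simpa using this
    have h3 : ρ ⟨α ⊓ β, (1 : G (α ⊓ β))⟩ ⟨β, (1 : G β)⟩ := by
      have := hρ.2 _ _ _ _ h1 (hρ.1.refl ⟨β, (1 : G β)⟩)
      rw [cliffMul_one_one, cliffMul_one_one] at this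
      rwa [sigma_one_congr (inf_idem β)] at this
    exact ⟨h1, hρ.1.trans h2 (hρ.1.symm h3)⟩
  · rintro ⟨h1, hw⟩
    have hαβ : ρ ⟨α, (1 : G α)⟩ ⟨α ⊓ β, (1 : G (α ⊓ β))⟩ := by
      have := hρ.2 _ _ _ _ h1 (hρ.1.refl ⟨α, (1 : G α)⟩)
      rw [cliffMul_one_one, cliffMul_one_one] at this
      rwa [sigma_one_congr (inf_idem α), sigma_one_congr (inf_comm β α)] at this
    have hβαβ : ρ ⟨β, (1 : G β)⟩ ⟨α ⊓ β, (1 : G (α ⊓ β))⟩ := by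
      have := hρ.2 _ _ _ _ (hρ.1.symm h1) (hρ.1.refl ⟨β, (1 : G β)⟩)
      rw [cliffMul_one_one, cliffMul_one_one] at this
      rwa [sigma_one_congr (inf_idem β)] at this
    have ha : ρ ⟨α, x⟩ ⟨α ⊓ β, φ α (α ⊓ β) inf_le_left x⟩ := by
      have := hρ.2 _ _ _ _ (hρ.1.refl ⟨α, x⟩) hαβ
      rw [cliffMul_same φ hid, cliffMul_mk] at this
      rw [map_one, mul_one, mul_one] at this
      have e : α ⊓ (α ⊓ β) = α ⊓ β := by rw [← inf_assoc, inf_idem]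
      rwa [sigma_phi_congr φ inf_le_left inf_le_left e x] at this
    have hb : ρ ⟨β, y⟩ ⟨α ⊓ β, φ β (α ⊓ β) inf_le_right y⟩ := by
      have := hρ.2 _ _ _ _ (hρ.1.refl ⟨β, y⟩) hβαβ
      rw [cliffMul_same φ hid, cliffMul_mk] at this
      rw [map_one, mul_one, mul_one] at this
      have e : β ⊓ (α ⊓ β) = α ⊓ β := inf_eq_right.mpr inf_le_right
      rwa [sigma_phi_congr φ inf_le_left inf_le_right e y] at this
    have hc : ρ ⟨α ⊓ β, φ α (α ⊓ β) inf_le_left x⟩ ⟨α ⊓ β, φ β (α ⊓ β) inf_le_right y⟩ := by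
      have := hρ.2 _ _ _ _ hw (hρ.1.refl ⟨α ⊓ β, φ β (α ⊓ β) inf_le_right y⟩)
      rw [cliffMul_same φ hid, cliffMul_same φ hid] at this
      rwa [inv_mul_cancel_right, one_mul] at this
    exact hρ.1.trans ha (hρ.1.trans hc (hρ.1.symm hb))

end Cliff

section Diag
variable {Y : Type*} [SemilatticeInf Y] {G : Y → Type*} [∀ α, Group (G α)]
  (φ : ∀ α β : Y, β ≤ α → (G α →* G β))

/-- The conditions on a family of subsets needed for the diagonal construction:
contains 1, closed under multiplication and conjugation, and closed under the
connecting homomorphisms. -/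
def FamP (N : ∀ α, Set (G α)) : Prop :=
  (∀ α, (1 : G α) ∈ N α) ∧ (∀ α, ∀ x ∈ N α, ∀ y ∈ N α, x * y ∈ N α) ∧
  (∀ α (g : G α), ∀ x ∈ N α, g * x * g⁻¹ ∈ N α) ∧
  (∀ α β (h : β ≤ α), ∀ x ∈ N α, φ α β h x ∈ N β)

lemma group_aux {H : Type*} [Group H] (N : Set H)
    (hmul : ∀ x ∈ N, ∀ y ∈ N, x * y ∈ N) (hconj : ∀ g : H, ∀ x ∈ N, g * x * g⁻¹ ∈ N)
    {X U Y V : H} (h1 : X * Y⁻¹ ∈ N) (h2 : U * V⁻¹ ∈ N) :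
    (X * U) * (Y * V)⁻¹ ∈ N := by
  have e : (X * U) * (Y * V)⁻¹ = (X * (U * V⁻¹) * X⁻¹) * (X * Y⁻¹) := by group
  rw [e]
  exact hmul _ (hconj X _ h2) _ h1

/-- The diagonal subsemigroup built from a diagonal on `Y` and a family. -/
def diagOf (τ : Y → Y → Prop) (N : ∀ α, Set (G α)) :
    (Σ δ, G δ) → (Σ δ, G δ) → Prop := fun a b =>
  τ a.1 b.1 ∧ φ a.1 (a.1 ⊓ b.1) inf_le_left a.2 *
    (φ b.1 (a.1 ⊓ b.1) inf_le_right b.2)⁻¹ ∈ N (a.1 ⊓ b.1)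

variable (hid2 : ∀ (α : Y) (x : G α), φ α α le_rfl x = x)
  (hcomp : ∀ (α β γ : Y) (h1 : β ≤ α) (h2 : γ ≤ β) (x : G α),
      φ β γ h2 (φ α β h1 x) = φ α γ (h2.trans h1) x)
include hcomp

lemma diagOf_isDiagonal {τ : Y → Y → Prop} (hτ : IsDiagonal (fun α β : Y => α ⊓ β) τ)
    {N : ∀ α, Set (G α)} (hN : FamP φ N) :
    IsDiagonal (cliffMul G φ) (diagOf φ τ N) := by
  obtain ⟨hone, hmul, hconj, hphi⟩ := hN
  constructor
  · rintro ⟨α, x⟩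
    refine ⟨hτ.1 α, ?_⟩
    simpa using hone (α ⊓ α)
  · rintro ⟨α, x⟩ ⟨β, y⟩ ⟨γ, u⟩ ⟨δ, v⟩ hab hcd
    dsimp only [diagOf, cliffMul] at hab hcd ⊢
    refine ⟨hτ.2 _ _ _ _ hab.1 hcd.1, ?_⟩
    set μ := (α ⊓ γ) ⊓ (β ⊓ δ) with hμ
    have hμαβ : μ ≤ α ⊓ β :=
      le_inf (le_trans inf_le_left inf_le_left) (le_trans inf_le_right inf_le_left)
    have hμγδ : μ ≤ γ ⊓ δ :=
      le_inf (le_trans inf_le_left inf_le_right) (le_trans inf_le_right inf_le_right)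
    have n1 := hphi _ _ hμαβ _ hab.2
    have n2 := hphi _ _ hμγδ _ hcd.2
    rw [map_mul, map_inv, hcomp, hcomp] at n1 n2
    rw [map_mul, map_mul, hcomp α (α ⊓ γ) μ, hcomp γ (α ⊓ γ) μ,
      hcomp β (β ⊓ δ) μ, hcomp δ (β ⊓ δ) μ]
    exact group_aux (N μ) (hmul μ) (hconj μ) n1 n2

omit hcomp in
lemma diagOf_trace_iff {τ : Y → Y → Prop} {N : ∀ α, Set (G α)} (hN : FamP φ N) (α β : Y) :
    diagOf φ τ N ⟨α, (1 : G α)⟩ ⟨β, (1 : G β)⟩ ↔ τ α β := by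
  constructor
  · exact fun h => h.1
  · intro h
    refine ⟨h, ?_⟩
    simpa using hN.1 _

omit hcomp in
include hid2 in
lemma mem_phi_congr {N : ∀ α, Set (G α)} {α β : Y} (e : β = α) (h : β ≤ α) (x : G α) :
    φ α β h x ∈ N β ↔ x ∈ N α := by
  subst e
  rw [show φ β β h x = x from hid2 β x]

end Diag

section Diag2
variable {Y : Type*} [SemilatticeInf Y] {G : Y → Type*} [∀ α, Group (G α)]
  (φ : ∀ α β : Y, β ≤ α → (G α →* G β))
  (hid : ∀ (α : Y) (x : G α), φ α α le_rfl x = x)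

include hid in
lemma diagOf_ker_iff {τ : Y → Y → Prop} (hτ : ∀ α, τ α α) {N : ∀ α, Set (G α)}
    (α : Y) (x : G α) :
    diagOf φ τ N ⟨α, x⟩ ⟨α, (1 : G α)⟩ ↔ x ∈ N α := by
  unfold diagOf
  dsimp only
  rw [map_one, inv_one, mul_one, mem_phi_congr φ hid (inf_idem α)]
  exact and_iff_right (hτ α)

variable {ρ : (Σ δ, G δ) → (Σ δ, G δ) → Prop} (hρ : IsCongruence (cliffMul G φ) ρ)
include hρ

omit hid in
lemma trace_isCong :
    IsCongruence (fun α β : Y => α ⊓ β) (fun α β => ρ ⟨α, (1 : G α)⟩ ⟨β, (1 : G β)⟩) := by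
  refine ⟨⟨fun α => hρ.1.refl _, fun h => hρ.1.symm h, fun h h' => hρ.1.trans h h'⟩, ?_⟩
  intro a b c d hab hcd
  have := hρ.2 _ _ _ _ hab hcd
  rwa [cliffMul_one_one, cliffMul_one_one] at this

include hid in
lemma ker_famP : FamP φ (fun α => {x : G α | ρ ⟨α, x⟩ ⟨α, 1⟩}) := by
  refine ⟨fun α => hρ.1.refl _, ?_, ?_, ?_⟩
  · intro α x hx y hy; exact ker_mul φ hid hρ hx hy
  · intro α g x hx; exact ker_conj φ hid hρ g hx
  · intro α β h x hx; exact ker_phi φ hid hρ h hx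

end Diag2

lemma eq_isCongruence {S : Type*} (mul : S → S → S) : IsCongruence mul Eq :=
  ⟨eq_equivalence, fun _ _ _ _ h1 h2 => by rw [h1, h2]⟩

lemma eq_isDiagonal {S : Type*} (mul : S → S → S) : IsDiagonal mul Eq :=
  ⟨fun _ => rfl, fun _ _ _ _ h1 h2 => by rw [h1, h2]⟩

/-- For a finite Clifford semigroup `S = 𝒮[Y; G_α; φ_{α,β}]` over a finite
semilattice `Y`, one has `0 < χ(S) ≤ χ(Y)`, where `Y` is regarded as a semigroup
under its meet operation. -/
theorem stmt19 {Y : Type*} [SemilatticeInf Y] [Finite Y]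
    (G : Y → Type*) [∀ α, Group (G α)] [∀ α, Finite (G α)]
    (φ : ∀ α β : Y, β ≤ α → (G α →* G β))
    (hid : ∀ (α : Y) (x : G α), φ α α le_rfl x = x)
    (hcomp : ∀ (α β γ : Y) (h1 : β ≤ α) (h2 : γ ≤ β) (x : G α),
      φ β γ h2 (φ α β h1 x) = φ α γ (h2.trans h1) x) :
    0 < chi (cliffMul G φ) ∧ chi (cliffMul G φ) ≤ chi (fun α β : Y => α ⊓ β) := by
  classical
  -- abbreviations
  have finS : Finite (Σ α, G α) := inferInstance
  haveI : Nonempty {ρ : (Σ α, G α) → (Σ α, G α) → Prop // IsCongruence (cliffMul G φ) ρ} :=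
    ⟨⟨Eq, eq_isCongruence _⟩⟩
  haveI : Nonempty {ρ : (Σ α, G α) → (Σ α, G α) → Prop // IsDiagonal (cliffMul G φ) ρ} :=
    ⟨⟨Eq, eq_isDiagonal _⟩⟩
  haveI : Nonempty {σ : Y → Y → Prop // IsCongruence (fun α β : Y => α ⊓ β) σ} :=
    ⟨⟨Eq, eq_isCongruence _⟩⟩
  haveI : Nonempty {σ : Y → Y → Prop // IsDiagonal (fun α β : Y => α ⊓ β) σ} :=
    ⟨⟨Eq, eq_isDiagonal _⟩⟩
  haveI : Nonempty {N : ∀ α, Set (G α) // FamP φ N} :=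
    ⟨⟨fun _ => Set.univ, ⟨fun _ => trivial, fun _ _ _ _ _ => trivial,
      fun _ _ _ _ => trivial, fun _ _ _ _ _ => trivial⟩⟩⟩
  set a := Nat.card {ρ : (Σ α, G α) → (Σ α, G α) → Prop // IsCongruence (cliffMul G φ) ρ} with hadef
  set b := Nat.card {ρ : (Σ α, G α) → (Σ α, G α) → Prop // IsDiagonal (cliffMul G φ) ρ} with hbdef
  set c := Nat.card {σ : Y → Y → Prop // IsCongruence (fun α β : Y => α ⊓ β) σ} with hcdef
  set d := Nat.card {σ : Y → Y → Prop // IsDiagonal (fun α β : Y => α ⊓ β) σ} with hddef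
  set f := Nat.card {N : ∀ α, Set (G α) // FamP φ N} with hfdef
  have ha : 0 < a := Nat.card_pos
  have hb : 0 < b := Nat.card_pos
  have hc : 0 < c := Nat.card_pos
  have hd : 0 < d := Nat.card_pos
  -- the injection on the congruence side
  have key1 : a ≤ c * f := by
    rw [hadef, hcdef, hfdef, ← Nat.card_prod]
    apply Nat.card_le_card_of_injective
      (f := fun ρ => (⟨fun α β => ρ.1 ⟨α, (1 : G α)⟩ ⟨β, (1 : G β)⟩, trace_isCong φ ρ.2⟩,
        ⟨fun α => {x : G α | ρ.1 ⟨α, x⟩ ⟨α, 1⟩}, ker_famP φ hid ρ.2⟩))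
    intro ρ ρ' h
    have e1 : (fun α β => ρ.1 ⟨α, (1 : G α)⟩ ⟨β, (1 : G β)⟩)
        = (fun α β => ρ'.1 ⟨α, (1 : G α)⟩ ⟨β, (1 : G β)⟩) :=
      Subtype.ext_iff.mp (congrArg Prod.fst h)
    have e2 : (fun α => {x : G α | ρ.1 ⟨α, x⟩ ⟨α, 1⟩})
        = (fun α => {x : G α | ρ'.1 ⟨α, x⟩ ⟨α, 1⟩}) :=
      Subtype.ext_iff.mp (congrArg Prod.snd h)
    have t : ∀ α β : Y, ρ.1 ⟨α, (1 : G α)⟩ ⟨β, (1 : G β)⟩ ↔ ρ'.1 ⟨α, (1 : G α)⟩ ⟨β, (1 : G β)⟩ := by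
      intro α β
      exact iff_of_eq (congrFun (congrFun e1 α) β)
    have k : ∀ (γ : Y) (z : G γ), ρ.1 ⟨γ, z⟩ ⟨γ, 1⟩ ↔ ρ'.1 ⟨γ, z⟩ ⟨γ, 1⟩ := by
      intro γ z
      exact iff_of_eq (congrArg (z ∈ ·) (congrFun e2 γ))
    apply Subtype.ext
    funext u v
    obtain ⟨α, x⟩ := u
    obtain ⟨β, y⟩ := v
    apply propext
    rw [cong_char φ hid ρ.2 x y, cong_char φ hid ρ'.2 x y]
    exact and_congr (t α β) (k _ _)
  -- the injection on the diagonal side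
  have key2 : d * f ≤ b := by
    rw [hbdef, hddef, hfdef, ← Nat.card_prod]
    apply Nat.card_le_card_of_injective
      (f := fun p : {σ : Y → Y → Prop // IsDiagonal (fun α β : Y => α ⊓ β) σ}
          × {N : ∀ α, Set (G α) // FamP φ N} =>
        (⟨diagOf φ p.1.1 p.2.1, diagOf_isDiagonal φ hcomp p.1.2 p.2.2⟩ :
          {ρ : (Σ α, G α) → (Σ α, G α) → Prop // IsDiagonal (cliffMul G φ) ρ}))
    rintro ⟨⟨τ, hτ⟩, ⟨N, hN⟩⟩ ⟨⟨τ', hτ'⟩, ⟨N', hN'⟩⟩ h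
    have e : diagOf φ τ N = diagOf φ τ' N' := Subtype.ext_iff.mp h
    have eτ : τ = τ' := by
      funext α β
      apply propext
      rw [← diagOf_trace_iff φ (τ := τ) hN α β, ← diagOf_trace_iff φ (τ := τ') hN' α β, e]
    have eN : N = N' := by
      funext α
      ext x
      rw [← diagOf_ker_iff φ hid (N := N) hτ.1 α x, ← diagOf_ker_iff φ hid (N := N') hτ'.1 α x, e]
    subst eτ
    subst eN
    rfl
  -- conclusion
  have hb' : (0 : ℚ) < (b : ℚ) := by exact_mod_cast hb
  have hd' : (0 : ℚ) < (d : ℚ) := by exact_mod_cast hd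
  constructor
  · exact div_pos (by exact_mod_cast ha) hb'
  · rw [chi, chi, div_le_div_iff₀ hb' hd']
    have : a * d ≤ c * b := by
      calc a * d ≤ (c * f) * d := Nat.mul_le_mul_right _ key1
        _ = c * (d * f) := by ring
        _ ≤ c * b := Nat.mul_le_mul_left _ key2
    exact_mod_cast this
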